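/- arXiv:1506.01759 — 6 statements merged into one kernel-verified Lean document; each statement's English description precedes it below -/
import Mathlib

section
/- Let K be a simplicial complex whose minimal non-faces N_1,...,N_r satisfy N_i ⊄ ⋃_{k≠i} N_k for all i. If N_i ∩ N_j = ∅ for some i ≠ j, then the full subcomplex K_{N_i ∪ N_j} equals the join ∂Δ^{N_i} * ∂Δ^{N_j} of the boundaries of the simplices on N_i and on N_j. -/
/-- `N` is a minimal non-face of the simplicial complex `K`. -/
def IsMNF {V : Type*} [DecidableEq V] (K : Finset V → Prop) (N : Finset V) : Prop :=
  N.Nonempty ∧ ¬ K N ∧ ∀ i ∈ N, K (N.erase i)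

/-- if the minimal non-faces `N 1, …, N r` of `K` satisfy
`N i ⊄ ⋃_{k ≠ i} N k` for all `i`, and `N i ∩ N j = ∅` for some `i ≠ j`, then the
full subcomplex `K_{N i ∪ N j}` equals the join `∂Δ^{N i} * ∂Δ^{N j}`, i.e. its
faces are exactly the unions `σ ∪ τ` of proper subsets `σ ⊊ N i`, `τ ⊊ N j`. -/
theorem full_subcomplex_eq_join_of_disjoint_mnf {V : Type*} [DecidableEq V] [Fintype V]
    (K : Finset V → Prop) (r : ℕ) (N : Fin r → Finset V)
    (hK : ∀ s : Finset V, K s ↔ ∀ i, ¬ N i ⊆ s)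
    (hMNF : ∀ s : Finset V, IsMNF K s ↔ ∃ i, s = N i)
    (hmin : ∀ i, ¬ N i ⊆ (Finset.univ.erase i).biUnion N)
    (i j : Fin r) (hij : i ≠ j) (hdisj : Disjoint (N i) (N j)) :
    ∀ s : Finset V, (K s ∧ s ⊆ N i ∪ N j) ↔ ∃ σ τ : Finset V, σ ⊂ N i ∧ τ ⊂ N j ∧ s = σ ∪ τ := by
  intro s
  constructor
  · rintro ⟨hKs, hsub⟩
    refine ⟨s ∩ N i, s ∩ N j, ?_, ?_, ?_⟩
    · refine Finset.ssubset_iff_subset_ne.mpr ⟨Finset.inter_subset_right, fun h => ?_⟩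
      exact ((hK s).mp hKs i) (h ▸ Finset.inter_subset_left)
    · refine Finset.ssubset_iff_subset_ne.mpr ⟨Finset.inter_subset_right, fun h => ?_⟩
      exact ((hK s).mp hKs j) (h ▸ Finset.inter_subset_left)
    · rw [← Finset.inter_union_distrib_left]
      exact (Finset.inter_eq_left.mpr hsub).symm
  · rintro ⟨σ, τ, hσ, hτ, rfl⟩
    have hsub : σ ∪ τ ⊆ N i ∪ N j := Finset.union_subset_union hσ.subset hτ.subset
    refine ⟨(hK _).mpr fun k hk => ?_, hsub⟩
    by_cases hki : k = i
    · subst hki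
      have : N k ⊆ σ := by
        intro x hx
        rcases Finset.mem_union.mp (hk hx) with h | h
        · exact h
        · exact absurd (hτ.subset h) (Finset.disjoint_left.mp hdisj hx)
      exact (hσ.not_subset) this
    by_cases hkj : k = j
    · subst hkj
      have : N k ⊆ τ := by
        intro x hx
        rcases Finset.mem_union.mp (hk hx) with h | h
        · exact absurd (hσ.subset h) (Finset.disjoint_right.mp hdisj hx)
        · exact h
      exact (hτ.not_subset) this
    · refine hmin k (hk.trans (hsub.trans ?_))
      intro x hx
      rcases Finset.mem_union.mp hx with h | h
      · exact Finset.mem_biUnion.mpr ⟨i, Finset.mem_erase.mpr ⟨Ne.symm hki, Finset.mem_univ _⟩, h⟩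
      · exact Finset.mem_biUnion.mpr ⟨j, Finset.mem_erase.mpr ⟨Ne.symm hkj, Finset.mem_univ _⟩, h⟩
end

section
/- With the construction K(N) as above, for any w ∈ W the deletion of w from K(N) equals the join K(N̂_w) * Δ^{A_w}, where N̂_w = {N_i : w ∉ N_i} (as a sequence of subsets of W − {w} with new points those a_i with w ∉ N_i) and A_w = {a_i : w ∈ N_i}. -/
/-- `Ñ i = N i ∪ {a i}` on the vertex set `W ⊕ Fin r` (`a i := Sum.inr i`). -/
def Ntilde {W : Type*} [DecidableEq W] {r : ℕ} (N : Fin r → Finset W) (i : Fin r) :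
    Finset (W ⊕ Fin r) :=
  (N i).image Sum.inl ∪ {Sum.inr i}

/-- `K(N)`: the complex on `W ⊕ Fin r` whose faces are the sets containing no `Ñ i`. -/
def KofN {W : Type*} [DecidableEq W] {r : ℕ} (N : Fin r → Finset W)
    (s : Finset (W ⊕ Fin r)) : Prop :=
  ∀ i, ¬ Ntilde N i ⊆ s

/-- `A_w = {a i : w ∈ N i}`. -/
def Aw {W : Type*} [DecidableEq W] {r : ℕ} (N : Fin r → Finset W) (w : W) :
    Finset (W ⊕ Fin r) :=
  (Finset.univ.filter fun i => w ∈ N i).image Sum.inr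

/-!
Removing `w` kills every minimal non-face `Ñ i` with `w ∈ N i`, which frees the new points
`a i` of those `i` (the set `A_w`) to be added to any face. The remaining `Ñ i` all avoid `A_w`,
so a set misses each of them exactly when its part outside `A_w` does.
-/

section

variable {W : Type*} [DecidableEq W] {r : ℕ} {N : Fin r → Finset W} {w : W} {i : Fin r}

theorem inl_mem_Ntilde (h : w ∈ N i) : Sum.inl w ∈ Ntilde N i :=
  Finset.mem_union_left _ (Finset.mem_image_of_mem _ h)

theorem disjoint_Ntilde_Aw (h : w ∉ N i) : Disjoint (Ntilde N i) (Aw N w) := by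
  simp only [Ntilde, Aw, Finset.disjoint_left]
  aesop

end

/-- The join `K(N̂_w) * Δ^{A_w}` is encoded by its faces `τ ∪ ρ`, with `ρ ⊆ A_w` and `τ` a face
of `K(N̂_w)` disjoint from `A_w`. -/
theorem deletion_KofN {W : Type*} [DecidableEq W] {r : ℕ} (N : Fin r → Finset W) (w : W) :
    ∀ σ : Finset (W ⊕ Fin r), Sum.inl w ∉ σ →
      (KofN N σ ↔ ∃ τ ρ : Finset (W ⊕ Fin r), σ = τ ∪ ρ ∧ ρ ⊆ Aw N w ∧
        Disjoint τ (Aw N w) ∧ ∀ i, w ∉ N i → ¬ Ntilde N i ⊆ τ) := by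
  intro σ hw
  constructor
  · intro hK
    refine ⟨σ \ Aw N w, σ ∩ Aw N w, (Finset.sdiff_union_inter σ _).symm,
      Finset.inter_subset_right, Finset.sdiff_disjoint, fun i _ hsub => ?_⟩
    exact hK i (hsub.trans Finset.sdiff_subset)
  · rintro ⟨τ, ρ, rfl, hρ, -, hτ⟩ i hsub
    by_cases hwi : w ∈ N i
    · exact hw (hsub (inl_mem_Ntilde hwi))
    · have hdisj : Disjoint (Ntilde N i) ρ := (disjoint_Ntilde_Aw hwi).mono_right hρ
      exact hτ i hwi (hdisj.left_le_of_le_sup_right hsub)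
end

section
/- Let N = {N_1,...,N_r} be subsets of a finite set W with K(N) the associated complex. If N_1 ∪ ⋯ ∪ N_r = W, then the geometric realization |K(N)| is homotopy equivalent to the sphere S^{|W|−1}, where S^{−1} = ∅. -/
/-- The geometric realization of a simplicial complex `K` on a finite vertex set `V`. -/
def realization {V : Type*} [Fintype V] (K : Finset V → Prop) : Set (V → ℝ) :=
  {x | (∀ v, 0 ≤ x v) ∧ (∑ v, x v) = 1 ∧ ∃ σ, K σ ∧ ∀ v, x v ≠ 0 → v ∈ σ}

open Finset Set Metric

namespace Stmt8

set_option linter.unusedSectionVars false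
set_option linter.unusedVariables false

section Part1


variable (W : Type*) [Fintype W]

/-- The polytope `P = {y ≥ 0, ∑ y ≤ 1}`. -/
def Pset : Set (W → ℝ) := {y | (∀ w, 0 ≤ y w) ∧ (∑ w, y w) ≤ 1}

/-- Its boundary. -/
def Bset : Set (W → ℝ) :=
  {y | ((∀ w, 0 ≤ y w) ∧ (∑ w, y w) ≤ 1) ∧ ((∑ w, y w) = 1 ∨ ∃ w, y w = 0)}

lemma isClosed_Pset : IsClosed (Pset W) := by
  have h1 : IsClosed {y : W → ℝ | ∀ w, 0 ≤ y w} := by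
    have : {y : W → ℝ | ∀ w, 0 ≤ y w} = ⋂ w, {y : W → ℝ | 0 ≤ y w} := by
      ext y; simp
    rw [this]
    exact isClosed_iInter fun w => isClosed_le continuous_const (continuous_apply w)
  have h2 : IsClosed {y : W → ℝ | (∑ w, y w) ≤ 1} :=
    isClosed_le (by continuity) continuous_const
  exact h1.inter h2

lemma convex_Pset : Convex ℝ (Pset W) := by
  intro y hy z hz a b ha hb hab
  refine ⟨fun w => ?_, ?_⟩
  · exact add_nonneg (mul_nonneg ha (hy.1 w)) (mul_nonneg hb (hz.1 w))
  · have : (∑ w, (a • y + b • z) w) = a * (∑ w, y w) + b * (∑ w, z w) := by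
      simp [Finset.sum_add_distrib, Finset.mul_sum]
    rw [this]
    calc a * (∑ w, y w) + b * (∑ w, z w) ≤ a * 1 + b * 1 := by
          gcongr; exacts [hy.2, hz.2]
      _ = 1 := by linarith

lemma interior_Pset :
    interior (Pset W) = {y | (∀ w, 0 < y w) ∧ (∑ w, y w) < 1} := by
  classical
  apply Set.Subset.antisymm
  · intro y hy
    obtain ⟨ε, hε, hball⟩ := Metric.isOpen_iff.1 isOpen_interior y hy
    have hP : ∀ z ∈ Metric.ball y ε, z ∈ Pset W := fun z hz => interior_subset (hball hz)
    have hpert : ∀ w : W, ∀ δ : ℝ, |δ| < ε → Function.update y w (y w + δ) ∈ Pset W := by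
      intro w δ hδ
      apply hP
      rw [Metric.mem_ball, dist_pi_lt_iff hε]
      intro w'
      by_cases hw : w' = w
      · subst hw; simp [Real.dist_eq, abs_sub_comm, hδ]
      · simp [Function.update_of_ne hw, hε]
    constructor
    · intro w
      have := (hpert w (-(ε/2)) (by rw [abs_neg, abs_of_pos (by linarith)]; linarith)).1 w
      simp only [Function.update_self] at this
      linarith
    · rcases isEmpty_or_nonempty W with hW | hW
      · simp
      · obtain ⟨w⟩ := hW
        have h2 := (hpert w (ε/2) (by rw [abs_of_pos (by linarith)]; linarith)).2
        rw [Finset.sum_update_of_mem (Finset.mem_univ w)] at h2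
        have : (∑ w', y w') = (∑ w' ∈ Finset.univ \ {w}, y w') + y w :=
          Finset.sum_eq_sum_sdiff_singleton_add (Finset.mem_univ w) y
        linarith
  · intro y hy
    have hopen : IsOpen {y : W → ℝ | (∀ w, 0 < y w) ∧ (∑ w, y w) < 1} := by
      have h1 : IsOpen {y : W → ℝ | ∀ w, 0 < y w} := by
        have : {y : W → ℝ | ∀ w, 0 < y w} = ⋂ w, {y : W → ℝ | 0 < y w} := by ext y; simp
        rw [this]
        exact isOpen_iInter_of_finite fun w =>
          isOpen_lt continuous_const (continuous_apply w)
      have h2 : IsOpen {y : W → ℝ | (∑ w, y w) < 1} :=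
        isOpen_lt (by continuity) continuous_const
      exact h1.inter h2
    have hsub : {y : W → ℝ | (∀ w, 0 < y w) ∧ (∑ w, y w) < 1} ⊆ Pset W :=
      fun z hz => ⟨fun w => (hz.1 w).le, hz.2.le⟩
    exact interior_maximal hsub hopen hy

lemma Bset_eq_frontier : Bset W = frontier (Pset W) := by
  rw [frontier, (isClosed_Pset W).closure_eq, interior_Pset]
  ext y
  simp only [Bset, Pset, Set.mem_setOf_eq, Set.mem_diff, not_and_or, not_forall, not_lt]
  constructor
  · rintro ⟨⟨h0, h1⟩, h2⟩
    refine ⟨⟨h0, h1⟩, ?_⟩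
    rcases h2 with h2 | ⟨w, hw⟩
    · exact Or.inr (h2.ge)
    · exact Or.inl ⟨w, hw.le⟩
  · rintro ⟨⟨h0, h1⟩, h2⟩
    refine ⟨⟨h0, h1⟩, ?_⟩
    rcases h2 with ⟨w, hw⟩ | h2
    · exact Or.inr ⟨w, le_antisymm hw (h0 w)⟩
    · exact Or.inl (le_antisymm h1 h2)

lemma bounded_Pset : Bornology.IsBounded (Pset W) := by
  rw [Metric.isBounded_iff_subset_closedBall 0]
  refine ⟨1, fun y hy => ?_⟩
  rw [Metric.mem_closedBall, dist_zero_right]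
  rw [pi_norm_le_iff_of_nonneg zero_le_one]
  intro w
  rw [Real.norm_eq_abs, abs_of_nonneg (hy.1 w)]
  calc y w ≤ ∑ w', y w' := Finset.single_le_sum (fun w' _ => hy.1 w') (Finset.mem_univ w)
    _ ≤ 1 := hy.2

lemma interior_Pset_nonempty : (interior (Pset W)).Nonempty := by
  rw [interior_Pset]
  refine ⟨fun _ => 1 / (2 * Fintype.card W + 2), fun w => by positivity, ?_⟩
  rw [Finset.sum_const, Finset.card_univ, nsmul_eq_mul]
  rw [div_eq_mul_inv, ← mul_assoc, mul_one]
  rw [← div_eq_mul_inv, div_lt_one (by positivity)]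
  have : (0:ℝ) ≤ Fintype.card W := Nat.cast_nonneg _
  linarith

set_option maxHeartbeats 1000000 in
/-- The boundary of `P` is homeomorphic to the Euclidean sphere. -/
lemma exists_homeo_Bset_sphere :
    Nonempty (↥(Bset W) ≃ₜ
      Metric.sphere (0 : EuclideanSpace ℝ (Fin (Fintype.card W))) 1) := by
  classical
  set n := Fintype.card W
  let e : (W → ℝ) ≃L[ℝ] EuclideanSpace ℝ (Fin n) :=
    ((EuclideanSpace.equiv W ℝ).symm).trans
      (LinearIsometryEquiv.piLpCongrLeft 2 ℝ ℝ (Fintype.equivFin W)).toContinuousLinearEquiv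
  have hconv : Convex ℝ (e '' Pset W) := (convex_Pset W).linear_image e.toLinearEquiv.toLinearMap
  have hne : (interior (e '' Pset W)).Nonempty := by
    obtain ⟨y, hy⟩ := interior_Pset_nonempty W
    refine ⟨e y, ?_⟩
    have him : ⇑e.toHomeomorph '' interior (Pset W) = interior (⇑e.toHomeomorph '' Pset W) :=
      e.toHomeomorph.image_interior (Pset W)
    have hco : ⇑e.toHomeomorph = ⇑e := rfl
    rw [hco] at him
    rw [← him]
    exact Set.mem_image_of_mem _ hy
  have hbdd : Bornology.IsBounded (⇑e '' Pset W) := by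
    have := (e.toContinuousLinearMap.lipschitz).isBounded_image (bounded_Pset W)
    have hco : ⇑e.toContinuousLinearMap = ⇑e := rfl
    rwa [hco] at this
  obtain ⟨g, -, -, hg⟩ :=
    exists_homeomorph_image_interior_closure_frontier_eq_unitBall hconv hne hbdd
  have hB : ⇑e '' Bset W = frontier (⇑e '' Pset W) := by
    have := e.toHomeomorph.image_frontier (Pset W)
    have hco : ⇑e.toHomeomorph = ⇑e := rfl
    rw [hco] at this
    rw [Bset_eq_frontier, this]
  refine ⟨(e.toHomeomorph.image (Bset W)).trans <|
    (Homeomorph.setCongr hB).trans <|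
    (g.image (frontier (e '' Pset W))).trans <| Homeomorph.setCongr hg⟩

end Part1

variable {W : Type*} [DecidableEq W] [Fintype W] {r : ℕ} (N : Fin r → Finset W)

/-- the `a`-mass of a point of the realization. -/
def amass (x : (W ⊕ Fin r) → ℝ) : ℝ := ∑ i, x (Sum.inr i)

def phi (x : (W ⊕ Fin r) → ℝ) : W → ℝ := fun w => x (Sum.inl w)

noncomputable def lam (y : W → ℝ) (i : Fin r) : ℝ :=
  ∑ w ∈ N i, max 0 ((1 - ∑ w', y w') - y w)

noncomputable def psiNum (y : W → ℝ) : (W ⊕ Fin r) → ℝ :=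
  Sum.elim (fun w => max 0 (y w - (1 - ∑ w', y w'))) (lam N y)

noncomputable def psiD (y : W → ℝ) : ℝ := ∑ v, psiNum N y v

noncomputable def psi (y : W → ℝ) : (W ⊕ Fin r) → ℝ := fun v => psiNum N y v / psiD N y

lemma pos_of_max_ne {c : ℝ} (h : max 0 c ≠ 0) : 0 < c := by
  by_contra hc
  exact h (max_eq_left (not_lt.1 hc))

lemma lam_nonneg (y : W → ℝ) (i : Fin r) : 0 ≤ lam N y i :=
  Finset.sum_nonneg fun w _ => le_max_left _ _

lemma psiNum_nonneg (y : W → ℝ) (v : W ⊕ Fin r) : 0 ≤ psiNum N y v := by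
  cases v with
  | inl w => exact le_max_left _ _
  | inr i => exact lam_nonneg N y i

lemma psiD_nonneg (y : W → ℝ) : 0 ≤ psiD N y :=
  Finset.sum_nonneg fun v _ => psiNum_nonneg N y v

/-- if `lam i ≠ 0` then some coordinate of `N i` is below the `a`-level. -/
lemma exists_lt_of_lam_ne (y : W → ℝ) {i : Fin r} (hl : lam N y i ≠ 0) :
    ∃ w ∈ N i, y w < 1 - ∑ w', y w' := by
  by_contra hcon
  push_neg at hcon
  refine hl (Finset.sum_eq_zero fun w hw => ?_)
  have := hcon w hw
  exact max_eq_left (by linarith)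

/-- `ψ` has positive denominator on `B`; this uses the covering hypothesis. -/
lemma psiD_pos (h : Finset.univ.biUnion N = Finset.univ)
    {y : W → ℝ} (hy : y ∈ Bset W) : 0 < psiD N y := by
  rcases hy with ⟨⟨h0, h1⟩, h2⟩
  rcases eq_or_lt_of_le h1 with heq | hlt
  · -- t = 0, the `W`-part sums to 1
    have hterm : ∀ w : W, psiNum N y (Sum.inl w) = y w := by
      intro w
      simp only [psiNum, Sum.elim_inl, heq]
      rw [sub_self, sub_zero]
      exact max_eq_right (h0 w)
    have hle : (∑ w, y w) ≤ psiD N y := by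
      rw [psiD, Fintype.sum_sum_type]
      have : (∑ w, psiNum N y (Sum.inl w)) = ∑ w, y w :=
        Finset.sum_congr rfl fun w _ => hterm w
      rw [this]
      have : 0 ≤ ∑ i, psiNum N y (Sum.inr i) :=
        Finset.sum_nonneg fun i _ => psiNum_nonneg N y _
      linarith
    linarith
  · -- t > 0, use a zero coordinate
    have hne : ¬ (∑ w, y w) = 1 := ne_of_lt hlt
    rcases h2 with h2 | ⟨w, hw⟩
    · exact absurd h2 hne
    · have hwN : ∃ i, w ∈ N i := by
        have : w ∈ Finset.univ.biUnion N := h ▸ Finset.mem_univ w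
        simpa using this
      obtain ⟨i, hi⟩ := hwN
      have hlam : 1 - (∑ w', y w') ≤ lam N y i := by
        have hterm : max 0 ((1 - ∑ w', y w') - y w) = (1 - ∑ w', y w') := by
          rw [hw, sub_zero]
          exact max_eq_right (by linarith)
        calc 1 - (∑ w', y w') = max 0 ((1 - ∑ w', y w') - y w) := hterm.symm
          _ ≤ ∑ w'' ∈ N i, max 0 ((1 - ∑ w', y w') - y w'') :=
              Finset.single_le_sum
                (f := fun w'' => max 0 ((1 - ∑ w', y w') - y w''))
                (fun w'' _ => le_max_left 0 _) hi
          _ = lam N y i := rfl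
      have : lam N y i ≤ psiD N y := by
        have : psiNum N y (Sum.inr i) = lam N y i := rfl
        calc lam N y i = psiNum N y (Sum.inr i) := rfl
          _ ≤ psiD N y := Finset.single_le_sum
              (fun v _ => psiNum_nonneg N y v) (Finset.mem_univ _)
      linarith

lemma psiD_eq_sum_psi (y : W → ℝ) (hD : psiD N y ≠ 0) : (∑ v, psi N y v) = 1 := by
  simp only [psi]
  rw [← Finset.sum_div, ← psiD, div_self hD]

/-- `ψ y` lies in the realization of `K(N)`. -/
lemma psi_mem (h : Finset.univ.biUnion N = Finset.univ)
    {y : W → ℝ} (hy : y ∈ Bset W) : psi N y ∈ realization (KofN N) := by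
  classical
  have hD := psiD_pos N h hy
  refine ⟨fun v => div_nonneg (psiNum_nonneg N y v) hD.le, psiD_eq_sum_psi N y hD.ne', ?_⟩
  refine ⟨Finset.univ.filter (fun v => psiNum N y v ≠ 0), ?_, ?_⟩
  · intro i hsub
    have hinr : Sum.inr i ∈ Finset.univ.filter (fun v => psiNum N y v ≠ 0) := by
      apply hsub
      simp [Ntilde]
    have hlam : lam N y i ≠ 0 := by
      simpa [psiNum] using (Finset.mem_filter.1 hinr).2
    obtain ⟨w, hwN, hwlt⟩ := exists_lt_of_lam_ne N y hlam
    have hinl : Sum.inl w ∈ Finset.univ.filter (fun v => psiNum N y v ≠ 0) := by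
      apply hsub
      simp only [Ntilde, Finset.mem_union, Finset.mem_image]
      exact Or.inl ⟨w, hwN, rfl⟩
    have : psiNum N y (Sum.inl w) ≠ 0 := (Finset.mem_filter.1 hinl).2
    have := pos_of_max_ne this
    linarith
  · intro v hv
    rw [Finset.mem_filter]
    refine ⟨Finset.mem_univ v, fun hnum => hv ?_⟩
    simp only [psi, hnum, zero_div]

/-- `φ x` lies in `B`. -/
lemma phi_mem {x : (W ⊕ Fin r) → ℝ} (hx : x ∈ realization (KofN N)) :
    phi x ∈ Bset W := by
  obtain ⟨h0, h1, σ, hσ, hsupp⟩ := hx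
  have hsplit : (∑ w, x (Sum.inl w)) + (∑ i, x (Sum.inr i)) = 1 := by
    rw [← h1, Fintype.sum_sum_type]
  have hW1 : (∑ w, phi x w) ≤ 1 := by
    have : 0 ≤ ∑ i, x (Sum.inr i) := Finset.sum_nonneg fun i _ => h0 _
    simp only [phi]; linarith
  refine ⟨⟨fun w => h0 _, hW1⟩, ?_⟩
  by_cases hsum : (∑ w, phi x w) = 1
  · exact Or.inl hsum
  · -- some a-coordinate is positive, so some N i coordinate vanishes
    have hamass : 0 < ∑ i, x (Sum.inr i) := by
      rcases lt_or_eq_of_le (Finset.sum_nonneg fun i (_ : i ∈ Finset.univ) => h0 (Sum.inr i)) with hlt | heq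
      · exact hlt
      · exfalso; apply hsum; simp only [phi]; linarith
    have hex : ∃ i, x (Sum.inr i) ≠ 0 := by
      by_contra hcon
      push_neg at hcon
      rw [Finset.sum_congr rfl fun i _ => hcon i, Finset.sum_const, smul_zero] at hamass
      exact lt_irrefl 0 hamass
    obtain ⟨i, hi⟩ := hex
    -- Ntilde i is not contained in σ, but inr i ∈ σ
    have hN := hσ i
    have : ∃ w ∈ N i, x (Sum.inl w) = 0 := by
      by_contra hcon
      push_neg at hcon
      apply hN
      intro v hv
      simp only [Ntilde, Finset.mem_union, Finset.mem_image, Finset.mem_singleton] at hv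
      rcases hv with ⟨w, hw, rfl⟩ | rfl
      · exact hsupp _ (hcon w hw)
      · exact hsupp _ hi
    obtain ⟨w, _, hw0⟩ := this
    exact Or.inr ⟨w, hw0⟩


section A

noncomputable def numA (s : ℝ) (x : (W ⊕ Fin r) → ℝ) : (W ⊕ Fin r) → ℝ :=
  Sum.elim (fun w => max 0 (x (Sum.inl w) - s * amass x)) (fun i => x (Sum.inr i))

noncomputable def dA (s : ℝ) (x : (W ⊕ Fin r) → ℝ) : ℝ := ∑ v, numA s x v

noncomputable def mapA (s : ℝ) (x : (W ⊕ Fin r) → ℝ) : (W ⊕ Fin r) → ℝ :=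
  fun v => numA s x v / dA s x

variable {x : (W ⊕ Fin r) → ℝ}

lemma amass_nonneg (h0 : ∀ v, 0 ≤ x v) : 0 ≤ amass x :=
  Finset.sum_nonneg fun i _ => h0 _

lemma numA_nonneg (s : ℝ) (h0 : ∀ v, 0 ≤ x v) (v : W ⊕ Fin r) : 0 ≤ numA s x v := by
  cases v with
  | inl w => exact le_max_left _ _
  | inr i => exact h0 _

lemma dA_pos (hx : x ∈ realization (KofN N)) {s : ℝ} (hs : 0 ≤ s) : 0 < dA s x := by
  obtain ⟨h0, h1, -⟩ := hx
  rcases eq_or_lt_of_le (amass_nonneg h0) with ht0 | htpos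
  · have hnum : ∀ v, numA s x v = x v := by
      intro v
      cases v with
      | inl w =>
        simp only [numA, Sum.elim_inl, ← ht0, mul_zero, sub_zero]
        exact max_eq_right (h0 _)
      | inr i => rfl
    have : dA s x = 1 := by
      rw [dA, Finset.sum_congr rfl fun v _ => hnum v, h1]
    rw [this]; exact one_pos
  · have : amass x ≤ dA s x := by
      rw [dA, Fintype.sum_sum_type, amass]
      have h1' : 0 ≤ ∑ w, numA s x (Sum.inl w) :=
        Finset.sum_nonneg fun w _ => numA_nonneg s h0 _
      have h2' : (∑ i, numA s x (Sum.inr i)) = ∑ i, x (Sum.inr i) := rfl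
      rw [h2']; linarith
    linarith

lemma mapA_zero (hx : x ∈ realization (KofN N)) : mapA 0 x = x := by
  obtain ⟨h0, h1, -⟩ := hx
  have hnum : ∀ v, numA 0 x v = x v := by
    intro v
    cases v with
    | inl w =>
      simp only [numA, Sum.elim_inl, zero_mul, sub_zero]
      exact max_eq_right (h0 _)
    | inr i => rfl
  have hD : dA 0 x = 1 := by rw [dA, Finset.sum_congr rfl fun v _ => hnum v, h1]
  funext v
  rw [mapA, hnum, hD, div_one]

lemma mapA_mem (hx : x ∈ realization (KofN N)) {s : ℝ} (hs : 0 ≤ s) :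
    mapA s x ∈ realization (KofN N) := by
  obtain ⟨h0, h1, σ, hσ, hsupp⟩ := hx
  have hD := dA_pos N ⟨h0, h1, σ, hσ, hsupp⟩ hs
  refine ⟨fun v => div_nonneg (numA_nonneg s h0 v) hD.le, ?_, σ, hσ, ?_⟩
  · simp only [mapA]
    rw [← Finset.sum_div, ← dA, div_self hD.ne']
  · intro v hv
    apply hsupp
    intro hxv
    apply hv
    have : numA s x v = 0 := by
      cases v with
      | inl w =>
        simp only [numA, Sum.elim_inl, hxv]
        refine max_eq_left ?_
        have := amass_nonneg h0
        nlinarith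
      | inr i => exact hxv
    rw [mapA, this, zero_div]

end A
lemma exists_zero_on_Ni {x : (W ⊕ Fin r) → ℝ} (hx : x ∈ realization (KofN N))
    {i : Fin r} (hi : x (Sum.inr i) ≠ 0) : ∃ w ∈ N i, x (Sum.inl w) = 0 := by
  obtain ⟨h0, h1, σ, hσ, hsupp⟩ := hx
  by_contra hcon
  push_neg at hcon
  apply hσ i
  intro v hv
  simp only [Ntilde, Finset.mem_union, Finset.mem_image, Finset.mem_singleton] at hv
  rcases hv with ⟨w, hw, rfl⟩ | rfl
  · exact hsupp _ (hcon w hw)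
  · exact hsupp _ hi

lemma one_sub_sum_phi {x : (W ⊕ Fin r) → ℝ} (hx : x ∈ realization (KofN N)) :
    1 - (∑ w, phi x w) = amass x := by
  obtain ⟨-, h1, -⟩ := hx
  rw [Fintype.sum_sum_type] at h1
  simp only [phi, amass]
  linarith

/-- The stage-B straight-line homotopy from `ρ = mapA 1` to `ψ ∘ φ` stays in the realization. -/
lemma stageB_mem (h : Finset.univ.biUnion N = Finset.univ)
    {x : (W ⊕ Fin r) → ℝ} (hx : x ∈ realization (KofN N))
    {s : ℝ} (hs0 : 0 ≤ s) (hs1 : s ≤ 1) :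
    (fun v => (1 - s) * mapA 1 x v + s * psi N (phi x) v) ∈ realization (KofN N) := by
  classical
  have ha := mapA_mem N hx zero_le_one
  have hb := psi_mem N h (phi_mem N hx)
  have ht' := one_sub_sum_phi N hx
  have hDa := (dA_pos N hx zero_le_one).ne'
  have hDb := (psiD_pos N h (phi_mem N hx)).ne'
  refine ⟨fun v => add_nonneg (mul_nonneg (by linarith) (ha.1 v)) (mul_nonneg hs0 (hb.1 v)),
    ?_, ?_⟩
  · rw [Finset.sum_add_distrib, ← Finset.mul_sum, ← Finset.mul_sum, ha.2.1, hb.2.1]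
    ring
  · refine ⟨Finset.univ.filter (fun v => mapA 1 x v ≠ 0 ∨ psi N (phi x) v ≠ 0), ?_, ?_⟩
    · -- the union of the supports is a face
      intro i hsub
      -- every w ∈ N i in the union support has x (inl w) > amass x
      have hkey : ∀ w ∈ N i, amass x < x (Sum.inl w) := by
        intro w hw
        have hinl : Sum.inl w ∈
            Finset.univ.filter (fun v => mapA 1 x v ≠ 0 ∨ psi N (phi x) v ≠ 0) := by
          apply hsub
          simp only [Ntilde, Finset.mem_union, Finset.mem_image, Finset.mem_singleton]
          exact Or.inl ⟨w, hw, rfl⟩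
        rcases (Finset.mem_filter.1 hinl).2 with hA | hB
        · have hnum : numA 1 x (Sum.inl w) ≠ 0 := by
            intro h0; exact hA (by rw [mapA, h0, zero_div])
          have := pos_of_max_ne hnum
          simp only [one_mul] at this
          linarith
        · have hnum : psiNum N (phi x) (Sum.inl w) ≠ 0 := by
            intro h0; exact hB (by simp only [psi, h0, zero_div])
          have := pos_of_max_ne hnum
          rw [ht'] at this
          simp only [phi] at this
          linarith
      have hinr : Sum.inr i ∈
          Finset.univ.filter (fun v => mapA 1 x v ≠ 0 ∨ psi N (phi x) v ≠ 0) := by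
        apply hsub; simp [Ntilde]
      rcases (Finset.mem_filter.1 hinr).2 with hA | hB
      · -- x (inr i) ≠ 0, so some coordinate of N i vanishes; contradiction
        have hxi : x (Sum.inr i) ≠ 0 := by
          intro h0
          apply hA
          have : numA 1 x (Sum.inr i) = 0 := h0
          rw [mapA, this, zero_div]
        obtain ⟨w, hw, hw0⟩ := exists_zero_on_Ni N hx hxi
        have := hkey w hw
        have := amass_nonneg hx.1
        rw [hw0] at *
        linarith
      · -- lam ≠ 0, so some coordinate of N i is < amass; contradiction
        have hlam : lam N (phi x) i ≠ 0 := by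
          intro h0
          apply hB
          have : psiNum N (phi x) (Sum.inr i) = 0 := h0
          simp only [psi, this, zero_div]
        obtain ⟨w, hw, hwlt⟩ := exists_lt_of_lam_ne N (phi x) hlam
        rw [ht'] at hwlt
        have := hkey w hw
        simp only [phi] at hwlt
        linarith
    · intro v hv
      rw [Finset.mem_filter]
      refine ⟨Finset.mem_univ v, ?_⟩
      by_contra hcon
      push_neg at hcon
      simp only [hcon.1, hcon.2, mul_zero, add_zero] at hv
      exact hv rfl

lemma psi_inl_zero_of_coord {y : W → ℝ} (hy : y ∈ Bset W) {w : W} (hw : y w = 0) :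
    psi N y (Sum.inl w) = 0 := by
  have ht : 0 ≤ 1 - ∑ w', y w' := by linarith [hy.1.2]
  have : psiNum N y (Sum.inl w) = 0 := by
    simp only [psiNum, Sum.elim_inl, hw, zero_sub]
    exact max_eq_left (by linarith)
  rw [psi, this, zero_div]

lemma psi_phi_sum_one {y : W → ℝ} (hy0 : ∀ w, 0 ≤ y w) (hsum : (∑ w, y w) = 1) :
    phi (psi N y) = y := by
  have ht : (1 : ℝ) - ∑ w', y w' = 0 := by rw [hsum]; ring
  have hnuml : ∀ w, psiNum N y (Sum.inl w) = y w := by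
    intro w
    simp only [psiNum, Sum.elim_inl, ht, sub_zero]
    exact max_eq_right (hy0 w)
  have hlam : ∀ i, lam N y i = 0 := by
    intro i
    refine Finset.sum_eq_zero fun w _ => ?_
    rw [ht]
    exact max_eq_left (by linarith [hy0 w])
  have hD : psiD N y = 1 := by
    rw [psiD, Fintype.sum_sum_type]
    have e1 : (∑ w, psiNum N y (Sum.inl w)) = ∑ w, y w :=
      Finset.sum_congr rfl fun w _ => hnuml w
    have e2 : (∑ i, psiNum N y (Sum.inr i)) = 0 :=
      Finset.sum_eq_zero fun i _ => hlam i
    rw [e1, e2, hsum, add_zero]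
  funext w
  simp only [phi, psi, hnuml, hD, div_one]

/-- The straight-line homotopy from `φ ∘ ψ` to `id` stays in `B`. -/
lemma H1_mem (h : Finset.univ.biUnion N = Finset.univ)
    {y : W → ℝ} (hy : y ∈ Bset W) {s : ℝ} (hs0 : 0 ≤ s) (hs1 : s ≤ 1) :
    (fun w => (1 - s) * phi (psi N y) w + s * y w) ∈ Bset W := by
  have hb := phi_mem N (psi_mem N h hy)
  rcases hy.2 with hsum | ⟨w0, hw0⟩
  · have heq : phi (psi N y) = y := psi_phi_sum_one N hy.1.1 hsum
    have : (fun w => (1 - s) * phi (psi N y) w + s * y w) = y := by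
      funext w; rw [heq]; ring
    rw [this]; exact hy
  · refine ⟨⟨fun w => add_nonneg (mul_nonneg (by linarith) (hb.1.1 w))
      (mul_nonneg hs0 (hy.1.1 w)), ?_⟩, ?_⟩
    · rw [Finset.sum_add_distrib, ← Finset.mul_sum, ← Finset.mul_sum]
      nlinarith [hb.1.2, hy.1.2]
    · refine Or.inr ⟨w0, ?_⟩
      have h2 : phi (psi N y) w0 = 0 := psi_inl_zero_of_coord N hy hw0
      show (1 - s) * phi (psi N y) w0 + s * y w0 = 0
      rw [h2, hw0]; ring

/- ### Continuity -/

lemma continuous_phi : Continuous (phi : ((W ⊕ Fin r) → ℝ) → (W → ℝ)) :=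
  continuous_pi fun _ => continuous_apply _

lemma continuous_amass : Continuous (amass : ((W ⊕ Fin r) → ℝ) → ℝ) :=
  continuous_finset_sum _ fun _ _ => continuous_apply _

lemma continuous_sum_coords : Continuous (fun y : W → ℝ => ∑ w, y w) :=
  continuous_finset_sum _ fun _ _ => continuous_apply _

lemma continuous_psiNum (v : W ⊕ Fin r) : Continuous fun y : W → ℝ => psiNum N y v := by
  cases v with
  | inl w =>
    show Continuous fun y : W → ℝ => max 0 (y w - (1 - ∑ w', y w'))
    exact continuous_const.max ((continuous_apply w).sub
      (continuous_const.sub continuous_sum_coords))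
  | inr i =>
    show Continuous fun y : W → ℝ => lam N y i
    exact continuous_finset_sum _ fun w _ => continuous_const.max
      ((continuous_const.sub continuous_sum_coords).sub (continuous_apply w))

lemma continuous_psiD : Continuous fun y : W → ℝ => psiD N y :=
  continuous_finset_sum _ fun v _ => continuous_psiNum N v

lemma continuous_numA (v : W ⊕ Fin r) :
    Continuous fun p : ℝ × ((W ⊕ Fin r) → ℝ) => numA p.1 p.2 v := by
  cases v with
  | inl w =>
    show Continuous fun p : ℝ × ((W ⊕ Fin r) → ℝ) =>
      max 0 (p.2 (Sum.inl w) - p.1 * amass p.2)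
    exact continuous_const.max (((continuous_apply (Sum.inl w)).comp continuous_snd).sub
      (continuous_fst.mul (continuous_amass.comp continuous_snd)))
  | inr i =>
    show Continuous fun p : ℝ × ((W ⊕ Fin r) → ℝ) => p.2 (Sum.inr i)
    exact (continuous_apply (Sum.inr i)).comp continuous_snd

lemma continuous_dA : Continuous fun p : ℝ × ((W ⊕ Fin r) → ℝ) => dA p.1 p.2 :=
  continuous_finset_sum _ fun v _ => continuous_numA v

/- ### Bundled maps and homotopies -/

noncomputable def phiC : C(↥(realization (KofN N)), ↥(Bset W)) :=
  ⟨fun x => ⟨phi x.1, phi_mem N x.2⟩,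
    Continuous.subtype_mk (continuous_phi.comp continuous_subtype_val) _⟩

noncomputable def psiC (h : Finset.univ.biUnion N = Finset.univ) :
    C(↥(Bset W), ↥(realization (KofN N))) :=
  ⟨fun y => ⟨psi N y.1, psi_mem N h y.2⟩, by
    refine Continuous.subtype_mk (continuous_pi fun v => ?_) _
    exact ((continuous_psiNum N v).comp continuous_subtype_val).div
      ((continuous_psiD N).comp continuous_subtype_val)
      (fun y => (psiD_pos N h y.2).ne')⟩

noncomputable def rhoC : C(↥(realization (KofN N)), ↥(realization (KofN N))) :=
  ⟨fun x => ⟨mapA 1 x.1, mapA_mem N x.2 zero_le_one⟩, by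
    refine Continuous.subtype_mk (continuous_pi fun v => ?_) _
    have hc : Continuous fun x : ↥(realization (KofN N)) =>
        ((1 : ℝ), (x : (W ⊕ Fin r) → ℝ)) := continuous_const.prodMk continuous_subtype_val
    exact ((continuous_numA v).comp hc).div ((continuous_dA).comp hc)
      (fun x => (dA_pos N x.2 zero_le_one).ne')⟩

noncomputable def FA : (ContinuousMap.id ↥(realization (KofN N))).Homotopy (rhoC N) where
  toFun := fun p => ⟨mapA (p.1 : ℝ) p.2.1, mapA_mem N p.2.2 p.1.2.1⟩
  continuous_toFun := by
    refine Continuous.subtype_mk (continuous_pi fun v => ?_) _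
    have hc : Continuous fun p : unitInterval × ↥(realization (KofN N)) =>
        ((p.1 : ℝ), (p.2 : (W ⊕ Fin r) → ℝ)) :=
      (continuous_subtype_val.comp continuous_fst).prodMk
        (continuous_subtype_val.comp continuous_snd)
    exact ((continuous_numA v).comp hc).div ((continuous_dA).comp hc)
      (fun p => (dA_pos N p.2.2 p.1.2.1).ne')
  map_zero_left := fun x => by
    simp only [ContinuousMap.coe_mk, Set.Icc.coe_zero, ContinuousMap.id_apply]
    exact Subtype.ext (mapA_zero N x.2)
  map_one_left := fun x => by
    simp only [ContinuousMap.coe_mk, Set.Icc.coe_one]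
    rfl

noncomputable def FB (h : Finset.univ.biUnion N = Finset.univ) :
    (rhoC N).Homotopy ((psiC N h).comp (phiC N)) where
  toFun := fun p => ⟨fun v => (1 - (p.1 : ℝ)) * mapA 1 p.2.1 v + (p.1 : ℝ) * psi N (phi p.2.1) v,
      stageB_mem N h p.2.2 p.1.2.1 p.1.2.2⟩
  continuous_toFun := by
    refine Continuous.subtype_mk (continuous_pi fun v => ?_) _
    have hs : Continuous fun p : unitInterval × ↥(realization (KofN N)) => (p.1 : ℝ) :=
      continuous_subtype_val.comp continuous_fst
    have hx : Continuous fun p : unitInterval × ↥(realization (KofN N)) =>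
        (p.2 : (W ⊕ Fin r) → ℝ) := continuous_subtype_val.comp continuous_snd
    have hc1 : Continuous fun p : unitInterval × ↥(realization (KofN N)) =>
        ((1 : ℝ), (p.2 : (W ⊕ Fin r) → ℝ)) := continuous_const.prodMk hx
    have hA : Continuous fun p : unitInterval × ↥(realization (KofN N)) =>
        mapA 1 p.2.1 v :=
      ((continuous_numA v).comp hc1).div ((continuous_dA).comp hc1)
        (fun p => (dA_pos N p.2.2 zero_le_one).ne')
    have hphi : Continuous fun p : unitInterval × ↥(realization (KofN N)) =>
        phi (p.2 : (W ⊕ Fin r) → ℝ) := continuous_phi.comp hx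
    have hB : Continuous fun p : unitInterval × ↥(realization (KofN N)) =>
        psi N (phi p.2.1) v :=
      ((continuous_psiNum N v).comp hphi).div ((continuous_psiD N).comp hphi)
        (fun p => (psiD_pos N h (phi_mem N p.2.2)).ne')
    exact ((continuous_const.sub hs).mul hA).add (hs.mul hB)
  map_zero_left := fun x => by
    refine Subtype.ext (funext fun v => ?_)
    simp only [ContinuousMap.coe_mk, Set.Icc.coe_zero, rhoC]
    ring
  map_one_left := fun x => by
    refine Subtype.ext (funext fun v => ?_)
    simp only [ContinuousMap.coe_mk, Set.Icc.coe_one, ContinuousMap.comp_apply, psiC, phiC]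
    ring

noncomputable def H1 (h : Finset.univ.biUnion N = Finset.univ) :
    ((phiC N).comp (psiC N h)).Homotopy (ContinuousMap.id ↥(Bset W)) where
  toFun := fun p => ⟨fun w => (1 - (p.1 : ℝ)) * phi (psi N p.2.1) w + (p.1 : ℝ) * p.2.1 w,
      H1_mem N h p.2.2 p.1.2.1 p.1.2.2⟩
  continuous_toFun := by
    refine Continuous.subtype_mk (continuous_pi fun w => ?_) _
    have hs : Continuous fun p : unitInterval × ↥(Bset W) => (p.1 : ℝ) :=
      continuous_subtype_val.comp continuous_fst
    have hy : Continuous fun p : unitInterval × ↥(Bset W) => (p.2 : W → ℝ) :=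
      continuous_subtype_val.comp continuous_snd
    have hB : Continuous fun p : unitInterval × ↥(Bset W) => phi (psi N p.2.1) w := by
      show Continuous fun p : unitInterval × ↥(Bset W) => psi N p.2.1 (Sum.inl w)
      exact ((continuous_psiNum N (Sum.inl w)).comp hy).div
        ((continuous_psiD N).comp hy) (fun p => (psiD_pos N h p.2.2).ne')
    exact ((continuous_const.sub hs).mul hB).add
      (hs.mul ((continuous_apply w).comp hy))
  map_zero_left := fun y => by
    refine Subtype.ext (funext fun w => ?_)
    simp only [ContinuousMap.coe_mk, Set.Icc.coe_zero, ContinuousMap.comp_apply, psiC, phiC]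
    ring
  map_one_left := fun y => by
    refine Subtype.ext (funext fun w => ?_)
    simp only [ContinuousMap.coe_mk, Set.Icc.coe_one, ContinuousMap.id_apply]
    ring

/-- The homotopy equivalence between the realization of `K(N)` and the boundary `B`. -/
noncomputable def KBequiv (h : Finset.univ.biUnion N = Finset.univ) :
    ContinuousMap.HomotopyEquiv ↥(realization (KofN N)) ↥(Bset W) where
  toFun := phiC N
  invFun := psiC N h
  left_inv := ⟨((FA N).trans (FB N h)).symm⟩
  right_inv := ⟨H1 N h⟩

end Stmt8

/-- if `N 1 ∪ ⋯ ∪ N r = W` then `|K(N)| ≃ S^{|W|−1}`, the unit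
sphere of `ℝ^{|W|}` (which is empty, i.e. `S^{−1}`, when `W = ∅`). -/
theorem realization_KofN_sphere {W : Type*} [DecidableEq W] [Fintype W]
    (r : ℕ) (N : Fin r → Finset W)
    (h : Finset.univ.biUnion N = Finset.univ) :
    Nonempty (ContinuousMap.HomotopyEquiv (realization (KofN N))
      (Metric.sphere (0 : EuclideanSpace ℝ (Fin (Fintype.card W))) 1)) := by
  obtain ⟨e⟩ := Stmt8.exists_homeo_Bset_sphere W
  exact ⟨(Stmt8.KBequiv N h).trans e.toHomotopyEquiv⟩
end

section
/- Let N = {N_1,...,N_r} and M = {M_1,...,M_r} be sequences of subsets of a finite set W with M_i ⊆ N_i for all i and M_1 ∪ ⋯ ∪ M_r = W. Then the inclusion of geometric realizations |K(M)| → |K(N)| is a homotopy equivalence. -/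
open Finset Function

def IsInclusionHomotopyEquiv {X : Type*} [TopologicalSpace X] (A B : Set X) : Prop :=
  ∃ h : ContinuousMap.HomotopyEquiv A B, ∀ x : A, (h x : X) = x

namespace IsInclusionHomotopyEquiv

variable {X : Type*} [TopologicalSpace X] {A B C : Set X}

theorem refl (A : Set X) : IsInclusionHomotopyEquiv A A :=
  ⟨.refl A, fun _ => rfl⟩

theorem trans (hAB : IsInclusionHomotopyEquiv A B) (hBC : IsInclusionHomotopyEquiv B C) :
    IsInclusionHomotopyEquiv A C :=
  let ⟨e₁, he₁⟩ := hAB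
  let ⟨e₂, he₂⟩ := hBC
  ⟨e₁.trans e₂, fun x => (he₂ (e₁ x)).trans (he₁ x)⟩

theorem of_deformation (hAB : A ⊆ B) (H : unitInterval → X → X) (hH : Continuous (uncurry H))
    (hH₀ : ∀ x ∈ B, H 0 x = x) (hHB : ∀ t, ∀ x ∈ B, H t x ∈ B)
    (hH₁ : ∀ x ∈ B, H 1 x ∈ A) (hHA : ∀ x ∈ A, H 1 x = x) :
    IsInclusionHomotopyEquiv A B := by
  let ι : C(A, B) := ⟨Set.inclusion hAB, continuous_inclusion hAB⟩
  let ρ : C(B, A) := ⟨fun x => ⟨H 1 x, hH₁ x x.2⟩,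
    (hH.comp (continuous_const.prodMk continuous_subtype_val)).subtype_mk _⟩
  have hρι : ρ.comp ι = ContinuousMap.id A := by
    ext x
    exact congrArg Subtype.val (Subtype.ext (hHA x x.2))
  let F : ContinuousMap.Homotopy (ContinuousMap.id B) (ι.comp ρ) :=
    { toFun := fun p => ⟨H p.1 p.2, hHB p.1 p.2 p.2.2⟩
      continuous_toFun :=
        (hH.comp (continuous_fst.prodMk (continuous_subtype_val.comp continuous_snd))).subtype_mk _
      map_zero_left := fun x => Subtype.ext (hH₀ x x.2)
      map_one_left := fun _ => rfl }
  exact ⟨⟨ι, ρ, hρι ▸ .refl _, ⟨F.symm⟩⟩, fun _ => rfl⟩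

end IsInclusionHomotopyEquiv

section PushOff

variable {V : Type*} [DecidableEq V] {τ : Finset V} (hτ : τ.Nonempty) (a : V)

noncomputable def pushOff (t : ℝ) (x : V → ℝ) : V → ℝ :=
  fun v => x v + t * τ.inf' hτ x * ((if v = a then (#τ : ℝ) else 0) - if v ∈ τ then 1 else 0)

variable {hτ a} {t : ℝ} {x : V → ℝ} {v : V}

theorem pushOff_zero : pushOff hτ a 0 x = x := by
  ext v
  simp [pushOff]

theorem pushOff_of_inf'_eq_zero (h : τ.inf' hτ x = 0) : pushOff hτ a t x = x := by
  ext v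
  simp [pushOff, h]

theorem sum_pushOff [Fintype V] : ∑ v, pushOff hτ a t x v = ∑ v, x v := by
  simp only [pushOff, sum_add_distrib, ← mul_sum, sum_sub_distrib, sum_ite_eq', sum_boole]
  simp

theorem pushOff_nonneg (ha : a ∉ τ) (hx : ∀ v, 0 ≤ x v) (ht₀ : 0 ≤ t) (ht₁ : t ≤ 1) (v : V) :
    0 ≤ pushOff hτ a t x v := by
  have hb : 0 ≤ τ.inf' hτ x := le_inf' _ _ fun w _ => hx w
  by_cases hvτ : v ∈ τ
  · have hva : v ≠ a := fun h => ha (h ▸ hvτ)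
    have : t * τ.inf' hτ x ≤ x v := (mul_le_of_le_one_left hb ht₁).trans (inf'_le _ hvτ)
    simp only [pushOff, hva, hvτ, if_false, if_true]
    linarith
  · have : 0 ≤ t * τ.inf' hτ x * (if v = a then (#τ : ℝ) else 0) := by positivity
    simp only [pushOff, hvτ, if_false, sub_zero]
    linarith [hx v]

theorem eq_or_ne_zero_of_pushOff_ne_zero (hx : ∀ v, 0 ≤ x v) (h : pushOff hτ a t x v ≠ 0) :
    v = a ∨ x v ≠ 0 := by
  rcases (le_inf' hτ x fun w _ => hx w).eq_or_lt with hb | hb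
  · rw [pushOff_of_inf'_eq_zero hb.symm] at h
    exact .inr h
  · by_cases hvτ : v ∈ τ
    · exact .inr ((inf'_le _ hvτ).trans_lt' hb).ne'
    · by_cases hva : v = a
      · exact .inl hva
      · simp only [pushOff, hva, hvτ, if_false, sub_zero, mul_zero, add_zero] at h
        exact .inr h

theorem pushOff_one_of_eq_inf' (ha : a ∉ τ) (hv : v ∈ τ) (hxv : x v = τ.inf' hτ x) :
    pushOff hτ a 1 x v = 0 := by
  have hva : v ≠ a := fun h => ha (h ▸ hv)
  simp only [pushOff, hva, hv, if_false, if_true, hxv]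
  ring

variable (hτ a) in
theorem continuous_pushOff : Continuous fun p : ℝ × (V → ℝ) => pushOff hτ a p.1 p.2 := by
  unfold pushOff
  fun_prop

end PushOff

section Realization

variable {V : Type*} [Fintype V] {K L : Finset V → Prop} {x : V → ℝ}

theorem realization_mono (h : ∀ σ, K σ → L σ) : realization K ⊆ realization L :=
  fun _ ⟨h₀, h₁, σ, hσ, hx⟩ => ⟨h₀, h₁, σ, h σ hσ, hx⟩

variable {τ : Finset V} {hτ : τ.Nonempty}
  (hL : ∀ σ ρ, L σ → ρ ⊆ σ → L ρ) (hKL : ∀ σ, K σ ↔ L σ ∧ ¬ τ ⊆ σ)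

include hKL in
theorem inf'_eq_zero_of_mem_realization (hx : x ∈ realization K) : τ.inf' hτ x = 0 := by
  obtain ⟨h₀, -, σ, hσ, hsupp⟩ := hx
  obtain ⟨v, hv, hvσ⟩ := not_subset.1 ((hKL σ).1 hσ).2
  have hxv : x v = 0 := by_contra fun h => hvσ (hsupp v h)
  exact le_antisymm (hxv ▸ inf'_le _ hv) (le_inf' _ _ fun w _ => h₀ w)

variable [DecidableEq V] {a : V} (hcone : ∀ σ, L σ → τ ⊆ σ → L (insert a σ))

include hL hKL in
theorem mem_realization_of_apply_eq_zero (hx : x ∈ realization L) {v : V} (hv : v ∈ τ)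
    (hxv : x v = 0) : x ∈ realization K := by
  obtain ⟨h₀, h₁, σ, hσ, hsupp⟩ := hx
  refine ⟨h₀, h₁, σ.erase v, (hKL _).2 ⟨hL σ _ hσ (erase_subset _ _), ?_⟩, ?_⟩
  · exact fun h => notMem_erase v σ (h hv)
  · exact fun w hw => mem_erase.2 ⟨fun h => hw (h ▸ hxv), hsupp w hw⟩

include hcone in
theorem pushOff_mem_realization (ha : a ∉ τ) (hx : x ∈ realization L) {t : ℝ} (ht₀ : 0 ≤ t)
    (ht₁ : t ≤ 1) : pushOff hτ a t x ∈ realization L := by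
  obtain ⟨h₀, h₁, σ, hσ, hsupp⟩ := hx
  rcases (le_inf' hτ x fun w _ => h₀ w).eq_or_lt with hb | hb
  · rw [pushOff_of_inf'_eq_zero hb.symm]
    exact ⟨h₀, h₁, σ, hσ, hsupp⟩
  have hτσ : τ ⊆ σ := fun v hv => hsupp v ((inf'_le _ hv).trans_lt' hb).ne'
  refine ⟨pushOff_nonneg ha h₀ ht₀ ht₁, sum_pushOff.trans h₁, insert a σ, hcone σ hσ hτσ,
    fun v hv => ?_⟩
  rcases eq_or_ne_zero_of_pushOff_ne_zero h₀ hv with rfl | hxv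
  · exact mem_insert_self _ _
  · exact mem_insert_of_mem (hsupp v hxv)

include hL hKL hcone in
theorem pushOff_one_mem_realization (ha : a ∉ τ) (hx : x ∈ realization L) :
    pushOff hτ a 1 x ∈ realization K := by
  obtain ⟨v, hv, hxv⟩ := exists_mem_eq_inf' hτ x
  exact mem_realization_of_apply_eq_zero hL hKL
    (pushOff_mem_realization hcone ha hx zero_le_one le_rfl) hv
    (pushOff_one_of_eq_inf' ha hv hxv.symm)

include hL hKL hcone in
theorem isInclusionHomotopyEquiv_realization_of_cone (hτ : τ.Nonempty) (ha : a ∉ τ) :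
    IsInclusionHomotopyEquiv (realization K) (realization L) :=
  .of_deformation (realization_mono fun σ hσ => ((hKL σ).1 hσ).1)
    (fun t => pushOff hτ a t)
    ((continuous_pushOff hτ a).comp (continuous_subtype_val.prodMap continuous_id))
    (fun _ _ => pushOff_zero)
    (fun t _ hx => pushOff_mem_realization hcone ha hx t.2.1 t.2.2)
    (fun _ hx => pushOff_one_mem_realization hL hKL hcone ha hx)
    (fun _ hx => pushOff_of_inf'_eq_zero (inf'_eq_zero_of_mem_realization hKL hx))

end Realization

section KofN

variable {W : Type*} [DecidableEq W] {r : ℕ} {M N : Fin r → Finset W} {σ ρ : Finset (W ⊕ Fin r)}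

theorem inl_mem_Ntilde_iff {w : W} {i : Fin r} : Sum.inl w ∈ Ntilde N i ↔ w ∈ N i := by
  simp [Ntilde]

theorem inr_mem_Ntilde_iff {k i : Fin r} : (Sum.inr k : W ⊕ Fin r) ∈ Ntilde N i ↔ k = i := by
  simp [Ntilde]

theorem Ntilde_nonempty (N : Fin r → Finset W) (i : Fin r) : (Ntilde N i).Nonempty :=
  ⟨Sum.inr i, inr_mem_Ntilde_iff.2 rfl⟩

theorem Ntilde_update_erase (i : Fin r) (w : W) :
    Ntilde (update N i ((N i).erase w)) i = (Ntilde N i).erase (Sum.inl w) := by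
  ext (v | k) <;> simp [Ntilde, and_comm]

theorem KofN.of_subset (h : KofN N σ) (hρ : ρ ⊆ σ) : KofN N ρ :=
  fun i hi => h i (hi.trans hρ)

theorem KofN.mono (hMN : M ≤ N) (h : KofN M σ) : KofN N σ :=
  fun i hi => h i ((union_subset_union (image_subset_image (hMN i)) subset_rfl).trans hi)

theorem KofN.update_iff {i₀ : Fin r} {s : Finset W} (hs : s ⊆ N i₀) :
    KofN (update N i₀ s) σ ↔ KofN N σ ∧ ¬ Ntilde (update N i₀ s) i₀ ⊆ σ := by
  refine ⟨fun h => ⟨?_, h i₀⟩, fun ⟨h, h₀⟩ i => ?_⟩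
  · exact h.mono (update_le_self_iff.2 hs)
  · rcases eq_or_ne i i₀ with rfl | hi
    · exact h₀
    · simpa [Ntilde, update_of_ne hi] using h i

theorem KofN.insert_inr {i₀ j : Fin r} {w : W} (hj : j ≠ i₀) (hw : w ∈ N i₀) (hwj : w ∈ N j)
    (hσ : KofN N σ) (hτσ : Ntilde (update N i₀ ((N i₀).erase w)) i₀ ⊆ σ) :
    KofN N (insert (Sum.inr j) σ) := by
  have hwσ : Sum.inl w ∉ σ := fun h => hσ i₀ <| by
    rw [← insert_erase (inl_mem_Ntilde_iff.2 hw), ← Ntilde_update_erase]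
    exact insert_subset h hτσ
  intro i hi
  rcases eq_or_ne i j with rfl | hij
  · exact hwσ ((mem_insert.1 (hi (inl_mem_Ntilde_iff.2 hwj))).resolve_left Sum.inl_ne_inr)
  · exact hσ i ((subset_insert_iff_of_notMem (mt inr_mem_Ntilde_iff.1 hij.symm)).1 hi)

variable [Fintype W]

theorem isInclusionHomotopyEquiv_realization_KofN_update_erase {i₀ j : Fin r} {w : W}
    (hj : j ≠ i₀) (hw : w ∈ N i₀) (hwj : w ∈ N j) :
    IsInclusionHomotopyEquiv (realization (KofN (update N i₀ ((N i₀).erase w))))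
      (realization (KofN N)) :=
  isInclusionHomotopyEquiv_realization_of_cone (fun _ _ => KofN.of_subset)
    (fun _ => KofN.update_iff (erase_subset _ _)) (fun _ => KofN.insert_inr hj hw hwj)
    (Ntilde_nonempty _ _) (mt inr_mem_Ntilde_iff.1 hj)

theorem isInclusionHomotopyEquiv_realization_KofN (hMN : M ≤ N)
    (hcover : univ.biUnion M = univ) :
    IsInclusionHomotopyEquiv (realization (KofN M)) (realization (KofN N)) := by
  induction N using WellFoundedLT.induction with
  | _ N ih =>
  rcases hMN.eq_or_lt with rfl | hlt
  · exact .refl _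
  obtain ⟨i₀, hi₀⟩ := (Pi.lt_def.1 hlt).2
  obtain ⟨w, hwN, hwM⟩ := exists_of_ssubset hi₀
  obtain ⟨j, -, hwj⟩ := mem_biUnion.1 (hcover ▸ mem_univ w)
  have hj : j ≠ i₀ := by
    rintro rfl
    exact hwM hwj
  have hMP : M ≤ update N i₀ ((N i₀).erase w) :=
    le_update_iff.2 ⟨subset_erase.2 ⟨hMN i₀, hwM⟩, fun i _ => hMN i⟩
  exact (ih _ (update_lt_self_iff.2 (erase_ssubset hwN)) hMP).trans
    (isInclusionHomotopyEquiv_realization_KofN_update_erase hj hwN (hMN j hwj))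

end KofN

/-- if `M i ⊆ N i` for all `i` and `M 1 ∪ ⋯ ∪ M r = W`, then the
inclusion `|K(M)| → |K(N)|` is a homotopy equivalence: there is a homotopy
equivalence whose underlying map is the inclusion. -/
theorem inclusion_realization_KofN_homotopyEquiv {W : Type*} [DecidableEq W] [Fintype W]
    (r : ℕ) (M N : Fin r → Finset W)
    (hMN : ∀ i, M i ⊆ N i)
    (hcover : Finset.univ.biUnion M = Finset.univ) :
    ∃ h : ContinuousMap.HomotopyEquiv (realization (KofN M)) (realization (KofN N)),
      ∀ x : realization (KofN M), (h.toFun x : (W ⊕ Fin r) → ℝ) = (x : (W ⊕ Fin r) → ℝ) :=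
  isInclusionHomotopyEquiv_realization_KofN hMN hcover
end

section
/- Let A_1,...,A_r be non-empty finite pairwise disjoint sets with n = |A_1| + ⋯ + |A_r|, and let K = ∂Δ^{A_1} * ⋯ * ∂Δ^{A_r}, so that RZ_K ≅ S^{|A_1|−1} × ⋯ × S^{|A_r|−1}. Then the (n−1)-st stage of the fat wedge filtration RZ_K^{n−1} contains the fat wedge T = {(x_1,...,x_r) : some x_i is the basepoint} and the inclusion T → RZ_K^{n−1} is a homotopy equivalence. -/
/-- The real moment-angle complex `ℝZ_K ⊆ [−1,1]^V`; we take `1 ∈ S⁰ = {−1,1}`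
as the basepoint of each coordinate. -/
def RZ {V : Type*} [Fintype V] (K : Finset V → Prop) : Set (V → ℝ) :=
  {x | (∀ v, x v ∈ Set.Icc (-1 : ℝ) 1) ∧
    ∃ σ, K σ ∧ ∀ v, v ∉ σ → x v = -1 ∨ x v = 1}

section FWAux

variable {V : Type*} [DecidableEq V] [Fintype V] {r : ℕ}

/-- Deformed coordinates: push each coordinate towards `1`, with speed governed by
`t · (max (blockmax) 0)²` in each block. -/
noncomputable def FWz (A : Fin r → Finset V) (hne : ∀ i, (A i).Nonempty) (bi : V → Fin r)
    (t : ℝ) (x : V → ℝ) (w : V) : ℝ :=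
  x w + t * max ((A (bi w)).sup' (hne (bi w)) x) 0 ^ 2 * (1 - x w)

/-- Blockwise sup norm of the deformed coordinates. -/
noncomputable def FWnu (A : Fin r → Finset V) (hne : ∀ i, (A i).Nonempty) (bi : V → Fin r)
    (t : ℝ) (x : V → ℝ) (v : V) : ℝ :=
  (A (bi v)).sup' (hne (bi v)) fun w => |FWz A hne bi t x w|

/-- The deformation: deformed coordinates renormalized blockwise back to the cube boundary. -/
noncomputable def FWG (A : Fin r → Finset V) (hne : ∀ i, (A i).Nonempty) (bi : V → Fin r)
    (t : ℝ) (x : V → ℝ) (v : V) : ℝ :=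
  FWz A hne bi t x v / FWnu A hne bi t x v

lemma FWz_block (A : Fin r → Finset V) (hne : ∀ i, (A i).Nonempty) (bi : V → Fin r)
    (hbi : ∀ i v, v ∈ A i → bi v = i) {t : ℝ} {x : V → ℝ} {i : Fin r} {w : V} (hw : w ∈ A i) :
    FWz A hne bi t x w = x w + t * max ((A i).sup' (hne i) x) 0 ^ 2 * (1 - x w) := by
  have h := hbi i w hw
  subst h
  rfl

lemma FWnu_block (A : Fin r → Finset V) (hne : ∀ i, (A i).Nonempty) (bi : V → Fin r)
    (hbi : ∀ i v, v ∈ A i → bi v = i) {t : ℝ} {x : V → ℝ} {i : Fin r} {w : V} (hw : w ∈ A i) :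
    FWnu A hne bi t x w = (A i).sup' (hne i) fun u => |FWz A hne bi t x u| := by
  have h := hbi i w hw
  subst h
  rfl

lemma FWz_bounds (A : Fin r → Finset V) (hne : ∀ i, (A i).Nonempty) (bi : V → Fin r)
    {t : ℝ} {x : V → ℝ} (ht0 : 0 ≤ t) (ht1 : t ≤ 1)
    (hb : ∀ v, x v ∈ Set.Icc (-1 : ℝ) 1) (w : V) :
    x w ≤ FWz A hne bi t x w ∧ FWz A hne bi t x w ≤ 1 := by
  have hm1 : (A (bi w)).sup' (hne (bi w)) x ≤ 1 :=
    Finset.sup'_le _ _ fun u _ => (hb u).2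
  set m : ℝ := (A (bi w)).sup' (hne (bi w)) x with hmdef
  have hc0 : 0 ≤ t * max m 0 ^ 2 := by positivity
  have hc1 : t * max m 0 ^ 2 ≤ 1 := by
    have h1 : max m 0 ≤ 1 := max_le hm1 zero_le_one
    have h0 : 0 ≤ max m 0 := le_max_right m 0
    nlinarith
  have h1x : 0 ≤ 1 - x w := by linarith [(hb w).2]
  unfold FWz
  rw [← hmdef]
  constructor
  · nlinarith
  · nlinarith

lemma FWz_abs_le_one (A : Fin r → Finset V) (hne : ∀ i, (A i).Nonempty) (bi : V → Fin r)
    {t : ℝ} {x : V → ℝ} (ht0 : 0 ≤ t) (ht1 : t ≤ 1)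
    (hb : ∀ v, x v ∈ Set.Icc (-1 : ℝ) 1) (w : V) :
    |FWz A hne bi t x w| ≤ 1 := by
  obtain ⟨h1, h2⟩ := FWz_bounds A hne bi ht0 ht1 hb w
  exact abs_le.2 ⟨by linarith [(hb w).1], h2⟩

lemma FWz_eq_one (A : Fin r → Finset V) (hne : ∀ i, (A i).Nonempty) (bi : V → Fin r)
    {t : ℝ} {x : V → ℝ} {v : V} (hv : x v = 1) :
    FWz A hne bi t x v = 1 := by
  unfold FWz; rw [hv]; ring

lemma FWnu_pos (A : Fin r → Finset V) (hne : ∀ i, (A i).Nonempty) (bi : V → Fin r)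
    (hbi : ∀ i v, v ∈ A i → bi v = i)
    {t : ℝ} {x : V → ℝ} (ht0 : 0 ≤ t) (ht1 : t ≤ 1)
    (hb : ∀ v, x v ∈ Set.Icc (-1 : ℝ) 1)
    (hq : ∀ i, ∃ v ∈ A i, x v = -1 ∨ x v = 1) (v : V) :
    0 < FWnu A hne bi t x v := by
  rcases le_or_gt ((A (bi v)).sup' (hne (bi v)) x) 0 with hm | hm
  · obtain ⟨w, hw, hwx⟩ := hq (bi v)
    have hz : FWz A hne bi t x w = x w := by
      rw [FWz_block A hne bi hbi hw, max_eq_right hm]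
      ring
    have h1 : (1 : ℝ) ≤ FWnu A hne bi t x v := by
      have hle : |FWz A hne bi t x w| ≤
          (A (bi v)).sup' (hne (bi v)) fun u => |FWz A hne bi t x u| :=
        Finset.le_sup' (fun u => |FWz A hne bi _ x u|) hw
      have habs : |FWz A hne bi t x w| = 1 := by
        rw [hz]; rcases hwx with h | h <;> simp [h]
      unfold FWnu
      rw [← habs]
      exact hle
    linarith
  · obtain ⟨w, hw, hwx⟩ := Finset.exists_mem_eq_sup' (hne (bi v)) x
    have hm1 : (A (bi v)).sup' (hne (bi v)) x ≤ 1 :=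
      Finset.sup'_le _ _ fun u _ => (hb u).2
    have hzw : 0 < FWz A hne bi t x w := by
      rw [FWz_block A hne bi hbi hw, ← hwx]
      have hc0 : 0 ≤ t * max ((A (bi v)).sup' (hne (bi v)) x) 0 ^ 2 := by positivity
      nlinarith
    have hle : |FWz A hne bi t x w| ≤
        (A (bi v)).sup' (hne (bi v)) fun u => |FWz A hne bi t x u| :=
      Finset.le_sup' (fun u => |FWz A hne bi _ x u|) hw
    have habs : 0 < |FWz A hne bi t x w| := abs_pos.2 (ne_of_gt hzw)
    unfold FWnu
    linarith
  -- note: `hle`'s sup' is over `A (bi v)` since `hw : w ∈ A (bi v)`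

lemma FWnu_le_one (A : Fin r → Finset V) (hne : ∀ i, (A i).Nonempty) (bi : V → Fin r)
    {t : ℝ} {x : V → ℝ} (ht0 : 0 ≤ t) (ht1 : t ≤ 1)
    (hb : ∀ v, x v ∈ Set.Icc (-1 : ℝ) 1) (v : V) :
    FWnu A hne bi t x v ≤ 1 :=
  Finset.sup'_le _ _ fun u _ => FWz_abs_le_one A hne bi ht0 ht1 hb u

lemma FWG_mem_Icc (A : Fin r → Finset V) (hne : ∀ i, (A i).Nonempty) (bi : V → Fin r)
    (hbiA : ∀ v, v ∈ A (bi v)) (hbi : ∀ i v, v ∈ A i → bi v = i)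
    {t : ℝ} {x : V → ℝ} (ht0 : 0 ≤ t) (ht1 : t ≤ 1)
    (hb : ∀ v, x v ∈ Set.Icc (-1 : ℝ) 1)
    (hq : ∀ i, ∃ v ∈ A i, x v = -1 ∨ x v = 1) (v : V) :
    FWG A hne bi t x v ∈ Set.Icc (-1 : ℝ) 1 := by
  have hpos := FWnu_pos A hne bi hbi ht0 ht1 hb hq v
  have habs : |FWG A hne bi t x v| ≤ 1 := by
    unfold FWG
    rw [abs_div, abs_of_pos hpos, div_le_one hpos]
    exact Finset.le_sup' (fun u => |FWz A hne bi t x u|) (hbiA v)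
  exact abs_le.1 habs

lemma FWG_block_boundary (A : Fin r → Finset V) (hne : ∀ i, (A i).Nonempty) (bi : V → Fin r)
    (hbiA : ∀ v, v ∈ A (bi v)) (hbi : ∀ i v, v ∈ A i → bi v = i)
    {t : ℝ} {x : V → ℝ} (ht0 : 0 ≤ t) (ht1 : t ≤ 1)
    (hb : ∀ v, x v ∈ Set.Icc (-1 : ℝ) 1)
    (hq : ∀ i, ∃ v ∈ A i, x v = -1 ∨ x v = 1) (i : Fin r) :
    ∃ w ∈ A i, FWG A hne bi t x w = -1 ∨ FWG A hne bi t x w = 1 := by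
  obtain ⟨w, hw, hsup⟩ := Finset.exists_mem_eq_sup' (hne i) fun u => |FWz A hne bi t x u|
  have hν : FWnu A hne bi t x w = |FWz A hne bi t x w| := by
    rw [FWnu_block A hne bi hbi hw]; exact hsup
  have hpos := FWnu_pos A hne bi hbi ht0 ht1 hb hq w
  have hz0 : FWz A hne bi t x w ≠ 0 := by
    intro h
    rw [hν, h, abs_zero] at hpos
    exact lt_irrefl _ hpos
  refine ⟨w, hw, ?_⟩
  unfold FWG
  rw [hν]
  rcases abs_cases (FWz A hne bi t x w) with ⟨h1, _⟩ | ⟨h1, _⟩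
  · right; rw [h1, div_self hz0]
  · left; rw [h1, div_neg, div_self hz0]

lemma FWG_eq_one (A : Fin r → Finset V) (hne : ∀ i, (A i).Nonempty) (bi : V → Fin r)
    (hbiA : ∀ v, v ∈ A (bi v)) (hbi : ∀ i v, v ∈ A i → bi v = i)
    {t : ℝ} {x : V → ℝ} (ht0 : 0 ≤ t) (ht1 : t ≤ 1)
    (hb : ∀ v, x v ∈ Set.Icc (-1 : ℝ) 1) {v : V} (hv : x v = 1) :
    FWG A hne bi t x v = 1 := by
  have hz : FWz A hne bi t x v = 1 := FWz_eq_one A hne bi hv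
  have hν : FWnu A hne bi t x v = 1 := by
    refine le_antisymm (FWnu_le_one A hne bi ht0 ht1 hb v) ?_
    have hle : |FWz A hne bi t x v| ≤
        (A (bi v)).sup' (hne (bi v)) fun u => |FWz A hne bi t x u| :=
      Finset.le_sup' (fun u => |FWz A hne bi t x u|) (hbiA v)
    rw [hz, abs_one] at hle
    unfold FWnu
    exact hle
  unfold FWG
  rw [hz, hν, div_one]

lemma FWG_block_one (A : Fin r → Finset V) (hne : ∀ i, (A i).Nonempty) (bi : V → Fin r)
    (hbiA : ∀ v, v ∈ A (bi v)) (hbi : ∀ i v, v ∈ A i → bi v = i)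
    {x : V → ℝ} (hb : ∀ v, x v ∈ Set.Icc (-1 : ℝ) 1)
    {v : V} (hv : x v = 1) :
    ∀ w ∈ A (bi v), FWG A hne bi 1 x w = 1 := by
  have hm : (A (bi v)).sup' (hne (bi v)) x = 1 := by
    refine le_antisymm (Finset.sup'_le _ _ fun u _ => (hb u).2) ?_
    have := Finset.le_sup' x (hbiA v)
    rw [hv] at this
    exact this
  have hz : ∀ u ∈ A (bi v), FWz A hne bi 1 x u = 1 := by
    intro u hu
    rw [FWz_block A hne bi hbi hu, hm, max_eq_left zero_le_one]
    ring
  intro w hw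
  have hν : FWnu A hne bi 1 x w = 1 := by
    rw [FWnu_block A hne bi hbi hw]
    refine le_antisymm (Finset.sup'_le _ _ fun u hu => by rw [hz u hu]; simp) ?_
    have hle : |FWz A hne bi 1 x w| ≤
        (A (bi v)).sup' (hne (bi v)) fun u => |FWz A hne bi 1 x u| :=
      Finset.le_sup' (fun u => |FWz A hne bi _ x u|) hw
    rw [hz w hw, abs_one] at hle
    exact hle
  unfold FWG
  rw [hz w hw, hν, div_one]

lemma FWG_zero (A : Fin r → Finset V) (hne : ∀ i, (A i).Nonempty) (bi : V → Fin r)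
    {x : V → ℝ} (hb : ∀ v, x v ∈ Set.Icc (-1 : ℝ) 1)
    (hq : ∀ i, ∃ v ∈ A i, x v = -1 ∨ x v = 1) (v : V) :
    FWG A hne bi 0 x v = x v := by
  have hz : ∀ w, FWz A hne bi 0 x w = x w := by
    intro w; unfold FWz; ring
  have hν : FWnu A hne bi 0 x v = 1 := by
    obtain ⟨w, hw, hwx⟩ := hq (bi v)
    refine le_antisymm
      (Finset.sup'_le _ _ fun u _ => by
        rw [hz u]; exact abs_le.2 ⟨(hb u).1, (hb u).2⟩) ?_
    have hle : |FWz A hne bi 0 x w| ≤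
        (A (bi v)).sup' (hne (bi v)) fun u => |FWz A hne bi 0 x u| :=
      Finset.le_sup' (fun u => |FWz A hne bi _ x u|) hw
    have habs : |FWz A hne bi 0 x w| = 1 := by
      rw [hz w]; rcases hwx with h | h <;> simp [h]
    rw [habs] at hle
    unfold FWnu
    exact hle
  unfold FWG
  rw [hz v, hν, div_one]

lemma FWG_continuous {X : Type*} [TopologicalSpace X]
    (A : Fin r → Finset V) (hne : ∀ i, (A i).Nonempty) (bi : V → Fin r)
    (τ : X → ℝ) (ξ : X → V → ℝ) (hτ : Continuous τ) (hξ : Continuous ξ)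
    (hnu : ∀ p v, FWnu A hne bi (τ p) (ξ p) v ≠ 0) :
    Continuous fun p => fun v => FWG A hne bi (τ p) (ξ p) v := by
  have hz : ∀ w, Continuous fun p => FWz A hne bi (τ p) (ξ p) w := by
    intro w
    have hsup : Continuous fun p => (A (bi w)).sup' (hne (bi w)) (ξ p) :=
      Continuous.finset_sup'_apply _ fun u _ => (continuous_apply u).comp hξ
    exact ((continuous_apply w).comp hξ).add
      ((hτ.mul ((hsup.max continuous_const).pow 2)).mul
        (continuous_const.sub ((continuous_apply w).comp hξ)))
  apply continuous_pi
  intro v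
  exact (hz v).div
    (Continuous.finset_sup'_apply _ fun u _ => (hz u).abs)
    fun p => hnu p v

end FWAux

/-- let `K = ∂Δ^{A 1} * ⋯ * ∂Δ^{A r}` on a vertex set of
cardinality `n`, so `ℝZ_K ≅ S^{|A 1|−1} × ⋯ × S^{|A r|−1}`.  The `(n−1)`-st stage
of the fat wedge filtration, `ℝZ_K^{n−1} = {x ∈ ℝZ_K | some coordinate is the
basepoint 1}`, contains the fat wedge `T = {x ∈ ℝZ_K | some sphere factor is at
its basepoint, i.e. ∃ i, x ≡ 1 on A i}`, and the inclusion `T → ℝZ_K^{n−1}` is a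
homotopy equivalence. -/
theorem fat_wedge_filtration_top_stage {V : Type*} [DecidableEq V] [Fintype V]
    (r : ℕ) (A : Fin r → Finset V)
    (hr : 0 < r)
    (hne : ∀ i, (A i).Nonempty)
    (hdisj : ∀ i j, i ≠ j → Disjoint (A i) (A j))
    (hcover : Finset.univ.biUnion A = Finset.univ) :
    (({x ∈ RZ (fun s : Finset V => ∀ i, ¬ A i ⊆ s) | ∃ i, ∀ v ∈ A i, x v = 1} : Set (V → ℝ)) ⊆
      {x ∈ RZ (fun s : Finset V => ∀ i, ¬ A i ⊆ s) | ∃ v, x v = 1}) ∧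
    ∃ h : ContinuousMap.HomotopyEquiv
        ({x ∈ RZ (fun s : Finset V => ∀ i, ¬ A i ⊆ s) | ∃ i, ∀ v ∈ A i, x v = 1} : Set (V → ℝ))
        ({x ∈ RZ (fun s : Finset V => ∀ i, ¬ A i ⊆ s) | ∃ v, x v = 1} : Set (V → ℝ)),
      ∀ x, (h.toFun x : V → ℝ) = (x : V → ℝ) := by
  classical
  -- block index function
  have hbiex : ∀ v : V, ∃ i, v ∈ A i := by
    intro v
    have hv : v ∈ Finset.univ.biUnion A := by rw [hcover]; exact Finset.mem_univ v
    simpa [Finset.mem_biUnion] using hv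
  choose bi hbiA using hbiex
  have hbi : ∀ i v, v ∈ A i → bi v = i := by
    intro i v hv
    by_contra h
    exact Finset.disjoint_left.mp (hdisj (bi v) i h) (hbiA v) hv
  -- characterization of membership in RZ
  have hchar : ∀ x : V → ℝ, x ∈ RZ (fun s : Finset V => ∀ i, ¬ A i ⊆ s) ↔
      ((∀ v, x v ∈ Set.Icc (-1 : ℝ) 1) ∧ ∀ i, ∃ v ∈ A i, x v = -1 ∨ x v = 1) := by
    intro x
    constructor
    · rintro ⟨hb, σ, hσ, hxσ⟩
      refine ⟨hb, fun i => ?_⟩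
      obtain ⟨v, hvA, hvσ⟩ := Finset.not_subset.mp (hσ i)
      exact ⟨v, hvA, hxσ v hvσ⟩
    · rintro ⟨hb, hq⟩
      choose f hf hfx using hq
      refine ⟨hb, (Finset.univ.image f)ᶜ, fun i hsub => ?_, fun v hv => ?_⟩
      · have h1 := hsub (hf i)
        simp only [Finset.mem_compl, Finset.mem_image] at h1
        exact h1 ⟨i, Finset.mem_univ i, rfl⟩
      · simp only [Finset.mem_compl, not_not, Finset.mem_image] at hv
        obtain ⟨i, -, hi⟩ := hv
        exact hi ▸ hfx i
  -- G stays in RZ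
  have hGRZ : ∀ (t : ℝ) (x : V → ℝ), 0 ≤ t → t ≤ 1 →
      x ∈ RZ (fun s : Finset V => ∀ i, ¬ A i ⊆ s) →
      (fun v => FWG A hne bi t x v) ∈ RZ (fun s : Finset V => ∀ i, ¬ A i ⊆ s) := by
    intro t x ht0 ht1 hx
    obtain ⟨hb, hq⟩ := (hchar x).1 hx
    exact (hchar _).2
      ⟨fun v => FWG_mem_Icc A hne bi hbiA hbi ht0 ht1 hb hq v,
       fun i => FWG_block_boundary A hne bi hbiA hbi ht0 ht1 hb hq i⟩
  -- the subset inclusion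
  have hsub : ({x ∈ RZ (fun s : Finset V => ∀ i, ¬ A i ⊆ s) |
      ∃ i, ∀ v ∈ A i, x v = 1} : Set (V → ℝ)) ⊆
      {x ∈ RZ (fun s : Finset V => ∀ i, ¬ A i ⊆ s) | ∃ v, x v = 1} := by
    rintro x ⟨hx, i, hxi⟩
    obtain ⟨v, hv⟩ := hne i
    exact ⟨hx, v, hxi v hv⟩
  refine ⟨hsub, ?_⟩
  -- membership lemmas for the homotopy
  have hmemW : ∀ (t : ℝ) (x : V → ℝ), 0 ≤ t → t ≤ 1 →
      x ∈ ({x ∈ RZ (fun s : Finset V => ∀ i, ¬ A i ⊆ s) | ∃ v, x v = 1} : Set (V → ℝ)) →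
      (fun v => FWG A hne bi t x v) ∈
        ({x ∈ RZ (fun s : Finset V => ∀ i, ¬ A i ⊆ s) | ∃ v, x v = 1} : Set (V → ℝ)) := by
    rintro t x ht0 ht1 ⟨hx, v0, hv0⟩
    obtain ⟨hb, hq⟩ := (hchar x).1 hx
    exact ⟨hGRZ t x ht0 ht1 hx, v0, FWG_eq_one A hne bi hbiA hbi ht0 ht1 hb hv0⟩
  have hmemT : ∀ (t : ℝ) (x : V → ℝ), 0 ≤ t → t ≤ 1 →
      x ∈ ({x ∈ RZ (fun s : Finset V => ∀ i, ¬ A i ⊆ s) |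
        ∃ i, ∀ v ∈ A i, x v = 1} : Set (V → ℝ)) →
      (fun v => FWG A hne bi t x v) ∈
        ({x ∈ RZ (fun s : Finset V => ∀ i, ¬ A i ⊆ s) |
          ∃ i, ∀ v ∈ A i, x v = 1} : Set (V → ℝ)) := by
    rintro t x ht0 ht1 ⟨hx, i, hxi⟩
    obtain ⟨hb, hq⟩ := (hchar x).1 hx
    refine ⟨hGRZ t x ht0 ht1 hx, i, fun w hw => ?_⟩
    exact FWG_eq_one A hne bi hbiA hbi ht0 ht1 hb (hxi w hw)
  have hmemT1 : ∀ x : V → ℝ,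
      x ∈ ({x ∈ RZ (fun s : Finset V => ∀ i, ¬ A i ⊆ s) | ∃ v, x v = 1} : Set (V → ℝ)) →
      (fun v => FWG A hne bi 1 x v) ∈
        ({x ∈ RZ (fun s : Finset V => ∀ i, ¬ A i ⊆ s) |
          ∃ i, ∀ v ∈ A i, x v = 1} : Set (V → ℝ)) := by
    rintro x ⟨hx, v0, hv0⟩
    obtain ⟨hb, hq⟩ := (hchar x).1 hx
    exact ⟨hGRZ 1 x zero_le_one le_rfl hx, bi v0,
      FWG_block_one A hne bi hbiA hbi hb hv0⟩
  -- abbreviations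
  set T : Set (V → ℝ) :=
    {x ∈ RZ (fun s : Finset V => ∀ i, ¬ A i ⊆ s) | ∃ i, ∀ v ∈ A i, x v = 1} with hT
  set W : Set (V → ℝ) :=
    {x ∈ RZ (fun s : Finset V => ∀ i, ¬ A i ⊆ s) | ∃ v, x v = 1} with hW
  have hnuW : ∀ (t : ℝ), 0 ≤ t → t ≤ 1 → ∀ (x : V → ℝ), x ∈ W →
      ∀ v, FWnu A hne bi t x v ≠ 0 := by
    intro t ht0 ht1 x hx v
    obtain ⟨hb, hq⟩ := (hchar x).1 hx.1
    exact ne_of_gt (FWnu_pos A hne bi hbi ht0 ht1 hb hq v)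
  -- the inclusion map
  have hcont_incl : Continuous fun x : T => (⟨(x : V → ℝ), hsub x.2⟩ : W) :=
    Continuous.subtype_mk continuous_subtype_val _
  -- the retraction map
  have hcont_g : Continuous fun x : W => (⟨fun v => FWG A hne bi 1 (x : V → ℝ) v,
      hmemT1 (x : V → ℝ) x.2⟩ : T) := by
    refine Continuous.subtype_mk ?_ _
    exact FWG_continuous A hne bi (fun _ => (1 : ℝ)) (fun x : W => (x : V → ℝ))
      continuous_const continuous_subtype_val
      (fun p v => hnuW 1 zero_le_one le_rfl _ p.2 v)
  -- time parameter facts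
  have ht0 : ∀ s : unitInterval, (0 : ℝ) ≤ 1 - (s : ℝ) := fun s => by
    have := s.2.2; linarith
  have ht1 : ∀ s : unitInterval, (1 : ℝ) - (s : ℝ) ≤ 1 := fun s => by
    have := s.2.1; linarith
  refine ⟨⟨⟨fun x => ⟨(x : V → ℝ), hsub x.2⟩, hcont_incl⟩,
    ⟨fun x => ⟨fun v => FWG A hne bi 1 (x : V → ℝ) v, hmemT1 (x : V → ℝ) x.2⟩, hcont_g⟩,
    ⟨?_⟩, ⟨?_⟩⟩, fun x => rfl⟩
  · -- left_inv : (g ∘ ι) ≃ id on T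
    refine ContinuousMap.Homotopy.mk
      ⟨fun p => ⟨fun v => FWG A hne bi (1 - (p.1 : ℝ)) (p.2 : V → ℝ) v,
        hmemT _ _ (ht0 p.1) (ht1 p.1) p.2.2⟩, ?_⟩ ?_ ?_
    · refine Continuous.subtype_mk ?_ _
      exact FWG_continuous A hne bi (fun p : unitInterval × T => 1 - (p.1 : ℝ))
        (fun p => ((p.2 : V → ℝ)))
        (continuous_const.sub (continuous_subtype_val.comp continuous_fst))
        (continuous_subtype_val.comp continuous_snd)
        (fun p v => hnuW _ (ht0 p.1) (ht1 p.1) _ (hsub p.2.2) v)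
    · intro x
      apply Subtype.ext
      show (fun v => FWG A hne bi (1 - (0 : ℝ)) (x : V → ℝ) v) = _
      norm_num
    · intro x
      apply Subtype.ext
      obtain ⟨hb, hq⟩ := (hchar (x : V → ℝ)).1 x.2.1
      show (fun v => FWG A hne bi (1 - (1 : ℝ)) (x : V → ℝ) v) = (x : V → ℝ)
      funext v
      norm_num [FWG_zero A hne bi hb hq v]
  · -- right_inv : (ι ∘ g) ≃ id on W
    refine ContinuousMap.Homotopy.mk
      ⟨fun p => ⟨fun v => FWG A hne bi (1 - (p.1 : ℝ)) (p.2 : V → ℝ) v,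
        hmemW _ _ (ht0 p.1) (ht1 p.1) p.2.2⟩, ?_⟩ ?_ ?_
    · refine Continuous.subtype_mk ?_ _
      exact FWG_continuous A hne bi (fun p : unitInterval × W => 1 - (p.1 : ℝ))
        (fun p => ((p.2 : V → ℝ)))
        (continuous_const.sub (continuous_subtype_val.comp continuous_fst))
        (continuous_subtype_val.comp continuous_snd)
        (fun p v => hnuW _ (ht0 p.1) (ht1 p.1) _ p.2.2 v)
    · intro x
      apply Subtype.ext
      show (fun v => FWG A hne bi (1 - (0 : ℝ)) (x : V → ℝ) v) = _
      norm_num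
    · intro x
      apply Subtype.ext
      obtain ⟨hb, hq⟩ := (hchar (x : V → ℝ)).1 x.2.1
      show (fun v => FWG A hne bi (1 - (1 : ℝ)) (x : V → ℝ) v) = (x : V → ℝ)
      funext v
      norm_num [FWG_zero A hne bi hb hq v]
end

section
/- Let K be a simplicial complex whose minimal non-faces N_1,...,N_r satisfy N_i ⊄ ⋃_{k≠i} N_k for all i, and suppose N_i ∩ N_j ≠ ∅ for all i, j. Then for every vertex v of K, the deletion dl_K(v) decomposes as L * Δ^S for some (possibly empty) set S and some complex L whose minimal non-faces pairwise intersect and still satisfy the Taylor-minimality condition. -/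
/-- suppose the minimal non-faces `N 1, …, N r` of `K` satisfy
`N i ⊄ ⋃_{k ≠ i} N k` and pairwise intersect.  Then for every vertex `v`, the
deletion `dl_K(v)` decomposes as a join `L * Δ^S`: there are `S` and a family
`M` of finite sets (the minimal non-faces of `L`, pairwise intersecting and
still Taylor-minimal, living away from `v` and from `S`) such that the faces of
`K` avoiding `v` are exactly the sets `τ ∪ ρ` with `ρ ⊆ S`, `τ` disjoint from
`S`, and `τ` a face of `L` (i.e. containing no `M i`). -/
theorem deletion_decomposes {V : Type*} [DecidableEq V] [Fintype V]
    (K : Finset V → Prop) (r : ℕ) (N : Fin r → Finset V)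
    (hK : ∀ s : Finset V, K s ↔ ∀ i, ¬ N i ⊆ s)
    (hMNF : ∀ s : Finset V, IsMNF K s ↔ ∃ i, s = N i)
    (hmin : ∀ i, ¬ N i ⊆ (Finset.univ.erase i).biUnion N)
    (hint : ∀ i j, (N i ∩ N j).Nonempty)
    (v : V) :
    ∃ (S : Finset V) (s : ℕ) (M : Fin s → Finset V),
      (∀ i j, (M i ∩ M j).Nonempty) ∧
      (∀ i, ¬ M i ⊆ (Finset.univ.erase i).biUnion M) ∧
      (∀ i, v ∉ M i ∧ Disjoint (M i) S) ∧ v ∉ S ∧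
      ∀ σ : Finset V, v ∉ σ →
        (K σ ↔ ∃ τ ρ : Finset V, σ = τ ∪ ρ ∧ ρ ⊆ S ∧ Disjoint τ S ∧ ∀ i, ¬ M i ⊆ τ) := by
  classical
  set I : Finset (Fin r) := Finset.univ.filter (fun i => v ∉ N i) with hI
  set S : Finset V := Finset.univ \ insert v (I.biUnion N) with hS
  set e : {x // x ∈ I} ≃ Fin I.card := I.equivFin with he
  refine ⟨S, I.card, fun k => N (e.symm k : Fin r), ?_, ?_, ?_, ?_, ?_⟩
  · intro i j; exact hint _ _
  · intro k hk
    apply hmin (e.symm k : Fin r)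
    intro x hx
    have := hk hx
    simp only [Finset.mem_biUnion, Finset.mem_erase, Finset.mem_univ, and_true] at this ⊢
    obtain ⟨k', hk', hxk'⟩ := this
    refine ⟨(e.symm k' : Fin r), ?_, hxk'⟩
    intro hcontra
    apply hk'
    have : e.symm k' = e.symm k := Subtype.ext hcontra
    have := congrArg e this
    simpa using this
  · intro k
    constructor
    · exact (Finset.mem_filter.mp (e.symm k).2).2
    · rw [hS]
      rw [Finset.disjoint_right]
      intro x hx
      simp only [Finset.mem_sdiff, Finset.mem_univ, true_and, Finset.mem_insert,
        Finset.mem_biUnion, not_or, not_exists] at hx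
      intro hmem
      exact hx.2 _ ⟨(e.symm k).2, hmem⟩
  · rw [hS]; simp
  · intro σ hvσ
    rw [hK]
    constructor
    · intro h
      refine ⟨σ \ S, σ ∩ S, ?_, Finset.inter_subset_right, Finset.sdiff_disjoint, ?_⟩
      · rw [Finset.sdiff_union_inter]
      · intro k hk
        exact h (e.symm k : Fin r) (hk.trans Finset.sdiff_subset)
    · rintro ⟨τ, ρ, rfl, hρS, hτS, hM⟩ i hNi
      by_cases hvi : v ∈ N i
      · exact (Finset.mem_union.mp (hNi hvi)).elim (fun h => hvσ (Finset.mem_union_left _ h))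
          (fun h => hvσ (Finset.mem_union_right _ h))
      · have hiI : i ∈ I := by rw [hI]; simp [hvi]
        have hNiS : Disjoint (N i) S := by
          rw [hS, Finset.disjoint_right]
          intro x hx
          simp only [Finset.mem_sdiff, Finset.mem_univ, true_and, Finset.mem_insert,
            Finset.mem_biUnion, not_or, not_exists] at hx
          exact fun hmem => hx.2 _ ⟨hiI, hmem⟩
        have hNiτ : N i ⊆ τ := by
          intro x hx
          rcases Finset.mem_union.mp (hNi hx) with h | h
          · exact h
          · exact absurd (hρS h) (Finset.disjoint_left.mp hNiS hx)
        apply hM (e ⟨i, hiI⟩)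
        simpa using hNiτ
end
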